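/- arXiv:2004.02188 — 7 statements merged into one kernel-verified Lean document; each statement's English description precedes it below -/
import Mathlib

section
/- Let F : ℝⁿ ⇉ ℝᵐ be a set-valued map with closed graph. If F is an open map from its domain into its range (i.e., the image under F of every open subset of dom F is open in range F with its subspace topology), then the function (x, y) ↦ dist(x, F⁻¹(y)), defined on ℝⁿ × range F, is continuous. -/
/-!
For fixed `x`, the map `y ↦ dist(x, F⁻¹(y))` is upper semicontinuous on `range F` because `F` is
open: a point of `F⁻¹(y₀)` at distance `< c` from `x` lies in the open ball `B(x, c)`, and the
image `F(B(x, c))` is a neighbourhood of `y₀` in `range F`. It is lower semicontinuous because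
the graph is closed: if `dist(x, F⁻¹(y₀)) > c`, the compact ball `B̄(x, c)` misses `F⁻¹(y₀)`, and
by the tube lemma it misses `F⁻¹(y)` for all `y` near `y₀`. Joint continuity follows since
`x ↦ dist(x, F⁻¹(y))` is `1`-Lipschitz for every `y`.
-/

open Metric Filter Topology Set

section SetValued

variable {X Y : Type*}

/-- `F(U)` is open in `range F` for every open `U`; subspace openness is expressed by an open
`W` of the ambient space. -/
def IsOpenSetValuedMap [TopologicalSpace X] [TopologicalSpace Y] (F : X → Set Y) : Prop :=
  ∀ U : Set X, IsOpen U →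
    ∃ W : Set Y, IsOpen W ∧ (⋃ x ∈ U ∩ {x | (F x).Nonempty}, F x) = W ∩ ⋃ x, F x

theorem IsCompact.eventually_forall_notMem_of_isClosed_graph [TopologicalSpace X]
    [TopologicalSpace Y] {F : X → Set Y} (hgraph : IsClosed {p : X × Y | p.2 ∈ F p.1})
    {K : Set X} (hK : IsCompact K) {y₀ : Y} (hy₀ : ∀ x ∈ K, y₀ ∉ F x) :
    ∀ᶠ y in 𝓝 y₀, ∀ x ∈ K, y ∉ F x := by
  refine hK.eventually_forall_of_forall_eventually fun x hx => ?_
  have hopen : IsOpen {p : Y × X | p.1 ∉ F p.2} :=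
    (hgraph.preimage continuous_swap).isOpen_compl
  exact hopen.mem_nhds (hy₀ x hx)

variable [PseudoMetricSpace X] [TopologicalSpace Y] {F : X → Set Y}

theorem IsOpenSetValuedMap.upperSemicontinuousWithinAt_infDist (hF : IsOpenSetValuedMap F)
    (x₀ : X) {y₀ : Y} (hy₀ : y₀ ∈ ⋃ x, F x) :
    UpperSemicontinuousWithinAt (fun y => infDist x₀ {x | y ∈ F x}) (⋃ x, F x) y₀ := by
  intro c hc
  obtain ⟨x₁, hx₁, hx₀x₁⟩ := (infDist_lt_iff (mem_iUnion.1 hy₀)).1 hc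
  obtain ⟨W, hW, hFW⟩ := hF (ball x₀ c) isOpen_ball
  have hy₀W : y₀ ∈ W ∩ ⋃ x, F x := by
    rw [← hFW]
    exact mem_biUnion ⟨mem_ball'.2 hx₀x₁, y₀, hx₁⟩ hx₁
  filter_upwards [inter_mem_nhdsWithin _ (hW.mem_nhds hy₀W.1)] with y hy
  rw [inter_comm, ← hFW] at hy
  obtain ⟨x, ⟨hx, -⟩, hyx⟩ := mem_iUnion₂.1 hy
  exact (infDist_le_dist_of_mem (s := {x | y ∈ F x}) hyx).trans_lt (mem_ball'.1 hx)

theorem lowerSemicontinuousWithinAt_infDist_of_isClosed_graph [ProperSpace X]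
    (hgraph : IsClosed {p : X × Y | p.2 ∈ F p.1}) (x₀ : X) (y₀ : Y) :
    LowerSemicontinuousWithinAt (fun y => infDist x₀ {x | y ∈ F x}) (⋃ x, F x) y₀ := by
  intro c hc
  obtain ⟨c', hcc', hc'⟩ := exists_between hc
  have hfar : ∀ x ∈ closedBall x₀ c', y₀ ∉ F x := fun x hx =>
    notMem_of_dist_lt_infDist (s := {x | y₀ ∈ F x}) ((mem_closedBall'.1 hx).trans_lt hc')
  filter_upwards [nhdsWithin_le_nhds
      ((isCompact_closedBall x₀ c').eventually_forall_notMem_of_isClosed_graph hgraph hfar),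
    self_mem_nhdsWithin] with y hy hyF
  refine hcc'.trans_le ((le_infDist (mem_iUnion.1 hyF)).2 fun x hx => ?_)
  by_contra! hlt
  exact hy x (mem_closedBall'.2 hlt.le) hx

theorem IsOpenSetValuedMap.continuousOn_infDist [ProperSpace X] (hF : IsOpenSetValuedMap F)
    (hgraph : IsClosed {p : X × Y | p.2 ∈ F p.1}) (x₀ : X) :
    ContinuousOn (fun y => infDist x₀ {x | y ∈ F x}) (⋃ x, F x) := fun y₀ hy₀ =>
  continuousWithinAt_iff_lower_upperSemicontinuousWithinAt.2
    ⟨lowerSemicontinuousWithinAt_infDist_of_isClosed_graph hgraph x₀ y₀,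
      hF.upperSemicontinuousWithinAt_infDist x₀ hy₀⟩

theorem IsOpenSetValuedMap.continuousOn_prod_infDist [ProperSpace X] (hF : IsOpenSetValuedMap F)
    (hgraph : IsClosed {p : X × Y | p.2 ∈ F p.1}) :
    ContinuousOn (fun p : X × Y => infDist p.1 {x | p.2 ∈ F x}) (univ ×ˢ ⋃ x, F x) :=
  continuousOn_prod_of_continuousOn_lipschitzOnWith (s := univ) _ 1
    (fun x₀ _ => hF.continuousOn_infDist hgraph x₀)
    (fun y _ => (lipschitz_infDist_pt {x | y ∈ F x}).lipschitzOnWith)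

end SetValued

/-- If a closed-graph set-valued map `F : ℝⁿ ⇉ ℝᵐ` is an open map from its
domain into its range, then `(x, y) ↦ dist(x, F⁻¹(y))` is continuous on `ℝⁿ × range F`. -/
theorem stmt0 {n m : ℕ}
    (F : EuclideanSpace ℝ (Fin n) → Set (EuclideanSpace ℝ (Fin m)))
    (hgraph : IsClosed {p : EuclideanSpace ℝ (Fin n) × EuclideanSpace ℝ (Fin m) | p.2 ∈ F p.1})
    (hopen : ∀ U : Set (EuclideanSpace ℝ (Fin n)), IsOpen U →
      ∃ W : Set (EuclideanSpace ℝ (Fin m)), IsOpen W ∧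
        (⋃ x ∈ U ∩ {x | (F x).Nonempty}, F x) = W ∩ ⋃ x, F x) :
    ContinuousOn
      (fun p : EuclideanSpace ℝ (Fin n) × EuclideanSpace ℝ (Fin m) =>
        Metric.infDist p.1 {x | p.2 ∈ F x})
      (Set.univ ×ˢ ⋃ x, F x) :=
  IsOpenSetValuedMap.continuousOn_prod_infDist hopen hgraph
end

section
/- Let F : ℝⁿ ⇉ ℝᵐ be a set-valued map with closed graph. If the function (x, y) ↦ dist(x, F⁻¹(y)) is continuous on ℝⁿ × range F, then F is an open map from its domain into its range, i.e., for every set U open in dom F, the set F(U) is open in range F. -/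
open Metric Set Filter Topology

theorem exists_isOpen_inter_eq_of_mem_nhdsWithin {Y : Type*} [TopologicalSpace Y] {S R : Set Y}
    (hSR : S ⊆ R) (hS : ∀ y ∈ S, S ∈ 𝓝[R] y) : ∃ W : Set Y, IsOpen W ∧ S = W ∩ R := by
  refine ⟨interior (Rᶜ ∪ S), isOpen_interior, Subset.antisymm ?_ ?_⟩
  · intro y hy
    refine ⟨mem_interior_iff_mem_nhds.mpr ?_, hSR hy⟩
    filter_upwards [mem_nhdsWithin_iff_eventually.mp (hS y hy)] with z hz
    exact or_iff_not_imp_left.mpr fun hzR => hz (not_not.mp hzR)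
  · rintro y ⟨hyW, hyR⟩
    exact (interior_subset hyW).resolve_left (not_not.mpr hyR)

theorem biUnion_mem_nhdsWithin_of_continuousWithinAt_infDist {X Y : Type*}
    [PseudoMetricSpace X] [TopologicalSpace Y] {F : X → Set Y} {U : Set X} {x : X} {y : Y}
    (hU : U ∈ 𝓝 x) (hy : y ∈ F x)
    (hcont : ContinuousWithinAt (fun y' => infDist x {x' | y' ∈ F x'}) (⋃ x, F x) y) :
    (⋃ x ∈ U, F x) ∈ 𝓝[⋃ x, F x] y := by
  obtain ⟨ε, hε, hball⟩ := Metric.mem_nhds_iff.mp hU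
  -- `dist(x, F⁻¹(y)) = 0`, so for `y' ∈ range F` near `y` some point of `F⁻¹(y')`
  -- is `ε`-close to `x`.
  have hnear : ∀ᶠ y' in 𝓝[⋃ x, F x] y, infDist x {x' | y' ∈ F x'} < ε :=
    hcont.tendsto.eventually_lt_const <| by
      rwa [infDist_zero_of_mem (show x ∈ {x' | y ∈ F x'} from hy)]
  filter_upwards [hnear, self_mem_nhdsWithin] with y' hy' hy'R
  obtain ⟨x', hx'y', hxx'⟩ := (infDist_lt_iff (mem_iUnion.mp hy'R)).mp hy'
  exact mem_biUnion (hball (mem_ball'.mpr hxx')) hx'y'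

theorem stmt1_general {n m : ℕ}
    (F : EuclideanSpace ℝ (Fin n) → Set (EuclideanSpace ℝ (Fin m)))
    (hcont : ContinuousOn
      (fun p : EuclideanSpace ℝ (Fin n) × EuclideanSpace ℝ (Fin m) =>
        Metric.infDist p.1 {x | p.2 ∈ F x})
      (Set.univ ×ˢ ⋃ x, F x)) :
    ∀ U : Set (EuclideanSpace ℝ (Fin n)), IsOpen U →
      ∃ W : Set (EuclideanSpace ℝ (Fin m)), IsOpen W ∧
        (⋃ x ∈ U ∩ {x | (F x).Nonempty}, F x) = W ∩ ⋃ x, F x := by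
  intro U hU
  have hdom : (⋃ x ∈ U ∩ {x | (F x).Nonempty}, F x) = ⋃ x ∈ U, F x := by
    ext y
    simp only [mem_iUnion, mem_inter_iff, exists_prop]
    exact ⟨fun ⟨x, ⟨hx, _⟩, hy⟩ => ⟨x, hx, hy⟩, fun ⟨x, hx, hy⟩ => ⟨x, ⟨hx, y, hy⟩, hy⟩⟩
  rw [hdom]
  refine exists_isOpen_inter_eq_of_mem_nhdsWithin
    (iUnion₂_subset fun x _ => subset_iUnion F x) fun y hy => ?_
  obtain ⟨x, hx, hyx⟩ := mem_iUnion₂.mp hy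
  have hslice := hcont.comp (Continuous.prodMk_right x).continuousOn
    fun y' hy' => (⟨trivial, hy'⟩ : (x, y') ∈ univ ×ˢ ⋃ x, F x)
  exact biUnion_mem_nhdsWithin_of_continuousWithinAt_infDist (hU.mem_nhds hx) hyx
    (hslice y (mem_iUnion.mpr ⟨x, hyx⟩))

/-- If `(x, y) ↦ dist(x, F⁻¹(y))` is continuous on `ℝⁿ × range F`, then the
closed-graph set-valued map `F` is an open map from its domain into its range. -/
theorem stmt1 {n m : ℕ}
    (F : EuclideanSpace ℝ (Fin n) → Set (EuclideanSpace ℝ (Fin m)))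
    (hgraph : IsClosed {p : EuclideanSpace ℝ (Fin n) × EuclideanSpace ℝ (Fin m) | p.2 ∈ F p.1})
    (hcont : ContinuousOn
      (fun p : EuclideanSpace ℝ (Fin n) × EuclideanSpace ℝ (Fin m) =>
        Metric.infDist p.1 {x | p.2 ∈ F x})
      (Set.univ ×ˢ ⋃ x, F x)) :
    ∀ U : Set (EuclideanSpace ℝ (Fin n)), IsOpen U →
      ∃ W : Set (EuclideanSpace ℝ (Fin m)), IsOpen W ∧
        (⋃ x ∈ U ∩ {x | (F x).Nonempty}, F x) = W ∩ ⋃ x, F x :=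
  stmt1_general F hcont
end

section
/- Let f : ℝⁿ → ℝ be a continuous function. If f has no local extremum points (no local minimizers and no local maximizers), then f is an open map. -/
/-!
Near a point `x` that is neither a local minimizer nor a local maximizer, every connected
neighbourhood of `x` contains points where `f` is below and above `f x`; by the intermediate
value theorem its image then contains an open interval around `f x`. Euclidean space is locally
connected, so every neighbourhood of `x` contains such a connected neighbourhood.
-/

open Filter Topology Set

variable {X Y : Type*} [TopologicalSpace X] [TopologicalSpace Y] [LinearOrder Y]
  [OrderTopology Y] {f : X → Y}

theorem IsPreconnected.image_mem_nhds_of_not_isLocalMin_of_not_isLocalMax {s : Set X} {x : X}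
    (hs : IsPreconnected s) (hsx : s ∈ 𝓝 x) (hf : ContinuousOn f s)
    (hmin : ¬ IsLocalMin f x) (hmax : ¬ IsLocalMax f x) : f '' s ∈ 𝓝 (f x) := by
  have hbelow : ∃ᶠ y in 𝓝 x, f y < f x := by
    simpa only [IsLocalMin, IsMinFilter, not_eventually, not_le] using hmin
  have habove : ∃ᶠ z in 𝓝 x, f x < f z := by
    simpa only [IsLocalMax, IsMaxFilter, not_eventually, not_le] using hmax
  obtain ⟨y, hy, hys⟩ := (hbelow.and_eventually hsx).exists
  obtain ⟨z, hz, hzs⟩ := (habove.and_eventually hsx).exists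
  exact mem_of_superset (Ioo_mem_nhds hy hz)
    (Ioo_subset_Icc_self.trans (hs.intermediate_value hys hzs hf))

theorem Continuous.isOpenMap_of_not_isLocalMin_of_not_isLocalMax [LocallyConnectedSpace X]
    (hf : Continuous f) (hmin : ∀ x, ¬ IsLocalMin f x) (hmax : ∀ x, ¬ IsLocalMax f x) :
    IsOpenMap f := by
  refine IsOpenMap.of_nhds_le fun x t ht => ?_
  have hC : connectedComponentIn (f ⁻¹' t) x ∈ 𝓝 x := connectedComponentIn_mem_nhds ht
  refine mem_of_superset (isPreconnected_connectedComponentIn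
    |>.image_mem_nhds_of_not_isLocalMin_of_not_isLocalMax hC hf.continuousOn (hmin x) (hmax x)) ?_
  exact image_subset_iff.mpr (connectedComponentIn_subset _ _)

/-- A continuous function `f : ℝⁿ → ℝ` with no local minimizers and no local
maximizers is an open map. -/
theorem stmt2 {n : ℕ} (f : EuclideanSpace ℝ (Fin n) → ℝ) (hf : Continuous f)
    (hmin : ∀ x, ¬ ∃ r > (0:ℝ), ∀ y ∈ Metric.closedBall x r, f x ≤ f y)
    (hmax : ∀ x, ¬ ∃ r > (0:ℝ), ∀ y ∈ Metric.closedBall x r, f y ≤ f x) :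
    IsOpenMap f :=
  hf.isOpenMap_of_not_isLocalMin_of_not_isLocalMax
    (fun x h => hmin x (Metric.nhds_basis_closedBall.eventually_iff.mp h))
    (fun x h => hmax x (Metric.nhds_basis_closedBall.eventually_iff.mp h))
end

section
/- Let F : ℝⁿ ⇉ ℝᵐ be a set-valued map with closed graph. Suppose F⁻¹ is lower pseudo-H\"older continuous: for each y* ∈ range F and each compact K ⊆ ℝⁿ there exist ε > 0, c > 0, α > 0 such that F⁻¹(y*) ∩ K ⊆ F⁻¹(y) + c‖y − y*‖^α · B̄ for all y ∈ B̄_ε(y*) ∩ range F. Then F is an open map from dom F into range F. -/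
/-!
Openness is local: it suffices that `F(U)` is a neighbourhood, within `range F`, of each of its
points `y ∈ F x` with `x ∈ U`. Applying the pseudo-Hölder property of `F⁻¹` at `y` to the compact
set `K = {x}`, every `z ∈ range F` close to `y` lies in some `F a` with
`‖x - a‖ ≤ c ‖z - y‖ ^ α`, and the right-hand side tends to `0` as `z → y`, so eventually `a ∈ U`.
-/

open Filter Topology Set

theorem exists_isOpen_inter_eq_of_forall_mem_nhdsWithin {X : Type*} [TopologicalSpace X]
    {S R : Set X} (hSR : S ⊆ R) (hS : ∀ y ∈ S, S ∈ 𝓝[R] y) :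
    ∃ W, IsOpen W ∧ S = W ∩ R := by
  choose! u hu_open hy_mem hu_sub using fun y hy => mem_nhdsWithin.1 (hS y hy)
  refine ⟨⋃ y ∈ S, u y, isOpen_biUnion hu_open, ?_⟩
  refine Subset.antisymm (fun y hy => ⟨mem_biUnion hy (hy_mem y hy), hSR hy⟩) ?_
  rintro z ⟨hz, hzR⟩
  obtain ⟨y, hy, hzy⟩ := mem_iUnion₂.1 hz
  exact hu_sub y hy ⟨hzy, hzR⟩

theorem biUnion_mem_nhdsWithin_of_dist_le_rpow {X Y : Type*} [PseudoMetricSpace X]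
    [PseudoMetricSpace Y] {F : X → Set Y} {U : Set X} {R : Set Y} {x : X} {y : Y} {c α : ℝ}
    (hU : U ∈ 𝓝 x) (hα : 0 < α)
    (h : ∀ᶠ z in 𝓝[R] y, ∃ a, z ∈ F a ∧ dist x a ≤ c * dist z y ^ α) :
    (⋃ a ∈ U, F a) ∈ 𝓝[R] y := by
  obtain ⟨r, hr, hball⟩ := Metric.mem_nhds_iff.1 hU
  have hdist : Tendsto (fun z => dist z y) (𝓝[R] y) (𝓝 0) :=
    ((continuous_id.dist continuous_const).tendsto' y 0 (dist_self y)).mono_left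
      nhdsWithin_le_nhds
  have hbound : Tendsto (fun z => c * dist z y ^ α) (𝓝[R] y) (𝓝 0) := by
    simpa [Real.zero_rpow hα.ne'] using (hdist.rpow_const (Or.inr hα.le)).const_mul c
  filter_upwards [h, hbound.eventually (gt_mem_nhds hr)] with z ⟨a, hza, hxa⟩ hsmall
  exact mem_biUnion (hball (by rw [Metric.mem_ball, dist_comm]; linarith)) hza

theorem stmt6_general {n m : ℕ}
    (F : EuclideanSpace ℝ (Fin n) → Set (EuclideanSpace ℝ (Fin m)))
    (hlph : ∀ ystar ∈ ⋃ x, F x, ∀ K : Set (EuclideanSpace ℝ (Fin n)), IsCompact K →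
      ∃ ε > (0:ℝ), ∃ c > (0:ℝ), ∃ α > (0:ℝ),
        ∀ y ∈ Metric.closedBall ystar ε ∩ ⋃ x, F x,
          ∀ x ∈ {x' | ystar ∈ F x'} ∩ K,
            ∃ a ∈ {x' | y ∈ F x'}, ‖x - a‖ ≤ c * ‖y - ystar‖ ^ α) :
    ∀ U : Set (EuclideanSpace ℝ (Fin n)), IsOpen U →
      ∃ W : Set (EuclideanSpace ℝ (Fin m)), IsOpen W ∧
        (⋃ x ∈ U ∩ {x | (F x).Nonempty}, F x) = W ∩ ⋃ x, F x := by
  intro U hU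
  have himage : (⋃ x ∈ U ∩ {x | (F x).Nonempty}, F x) = ⋃ x ∈ U, F x :=
    Subset.antisymm (biUnion_subset_biUnion_left inter_subset_left) fun z hz => by
      obtain ⟨x, hxU, hz⟩ := mem_iUnion₂.1 hz
      exact mem_biUnion ⟨hxU, z, hz⟩ hz
  rw [himage]
  refine exists_isOpen_inter_eq_of_forall_mem_nhdsWithin
    (iUnion₂_subset fun x _ => subset_iUnion F x) fun y hy => ?_
  obtain ⟨x, hxU, hyx⟩ := mem_iUnion₂.1 hy
  obtain ⟨ε, hε, c, -, α, hα, hclose⟩ :=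
    hlph y (mem_iUnion_of_mem x hyx) {x} isCompact_singleton
  refine biUnion_mem_nhdsWithin_of_dist_le_rpow (c := c) (hU.mem_nhds hxU) hα ?_
  filter_upwards [self_mem_nhdsWithin,
    nhdsWithin_le_nhds (Metric.closedBall_mem_nhds y hε)] with z hzR hzy
  obtain ⟨a, hza, hxa⟩ := hclose z ⟨hzy, hzR⟩ x ⟨hyx, rfl⟩
  exact ⟨a, hza, by simpa only [dist_eq_norm] using hxa⟩

/-- If `F⁻¹` is lower pseudo-Hölder continuous, then the closed-graph set-valued
map `F` is an open map from its domain into its range. -/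
theorem stmt6 {n m : ℕ}
    (F : EuclideanSpace ℝ (Fin n) → Set (EuclideanSpace ℝ (Fin m)))
    (hgraph : IsClosed {p : EuclideanSpace ℝ (Fin n) × EuclideanSpace ℝ (Fin m) | p.2 ∈ F p.1})
    (hlph : ∀ ystar ∈ ⋃ x, F x, ∀ K : Set (EuclideanSpace ℝ (Fin n)), IsCompact K →
      ∃ ε > (0:ℝ), ∃ c > (0:ℝ), ∃ α > (0:ℝ),
        ∀ y ∈ Metric.closedBall ystar ε ∩ ⋃ x, F x,
          ∀ x ∈ {x' | ystar ∈ F x'} ∩ K,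
            ∃ a ∈ {x' | y ∈ F x'}, ‖x - a‖ ≤ c * ‖y - ystar‖ ^ α) :
    ∀ U : Set (EuclideanSpace ℝ (Fin n)), IsOpen U →
      ∃ W : Set (EuclideanSpace ℝ (Fin m)), IsOpen W ∧
        (⋃ x ∈ U ∩ {x | (F x).Nonempty}, F x) = W ∩ ⋃ x, F x :=
  stmt6_general F hlph
end

section
/- Let F : ℝⁿ ⇉ ℝᵐ be a set-valued map with closed graph. Suppose F⁻¹ is lower pseudo-H\"older continuous: for each y* ∈ range F and each compact K ⊆ ℝⁿ there exist ε > 0, c > 0, α > 0 such that F⁻¹(y*) ∩ K ⊆ F⁻¹(y) + c‖y − y*‖^α · B̄ for all y ∈ B̄_ε(y*) ∩ range F. Then range F is locally closed in ℝᵐ. -/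
/-!
Fix `x₀ ∈ F⁻¹(y*)` and apply the hypothesis with `K = {x₀}`: every `y ∈ range F` close to `y*`
has a preimage in the compact ball `L = B̄(x₀, c εᵅ)`. Near `y*` the range therefore agrees with
`F(L)`, the projection of the closed graph restricted to `L × ℝᵐ`, which is closed because `L` is
compact.
-/

open Set Metric

theorem isClosed_biUnion_of_isClosed_graph {X Y : Type*} [TopologicalSpace X]
    [TopologicalSpace Y] {F : X → Set Y} (hF : IsClosed {p : X × Y | p.2 ∈ F p.1})
    {K : Set X} (hK : IsCompact K) : IsClosed (⋃ x ∈ K, F x) := by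
  have : CompactSpace K := isCompact_iff_compactSpace.mp hK
  have hgraphK : IsClosed {p : K × Y | p.2 ∈ F p.1} :=
    hF.preimage (continuous_subtype_val.prodMap continuous_id)
  convert isClosedMap_snd_of_compactSpace _ hgraphK using 1
  ext y
  simp

/-- If `F⁻¹` is lower pseudo-Hölder continuous, then `range F` is locally
closed in `ℝᵐ`. -/
theorem stmt7 {n m : ℕ}
    (F : EuclideanSpace ℝ (Fin n) → Set (EuclideanSpace ℝ (Fin m)))
    (hgraph : IsClosed {p : EuclideanSpace ℝ (Fin n) × EuclideanSpace ℝ (Fin m) | p.2 ∈ F p.1})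
    (hlph : ∀ ystar ∈ ⋃ x, F x, ∀ K : Set (EuclideanSpace ℝ (Fin n)), IsCompact K →
      ∃ ε > (0:ℝ), ∃ c > (0:ℝ), ∃ α > (0:ℝ),
        ∀ y ∈ Metric.closedBall ystar ε ∩ ⋃ x, F x,
          ∀ x ∈ {x' | ystar ∈ F x'} ∩ K,
            ∃ a ∈ {x' | y ∈ F x'}, ‖x - a‖ ≤ c * ‖y - ystar‖ ^ α) :
    ∀ y ∈ ⋃ x, F x, ∃ ε > (0:ℝ), IsClosed (Metric.closedBall y ε ∩ ⋃ x, F x) := by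
  intro ystar hystar
  obtain ⟨x₀, hx₀⟩ := mem_iUnion.mp hystar
  obtain ⟨ε, hε, c, hc, α, hα, hölder⟩ := hlph ystar hystar {x₀} isCompact_singleton
  refine ⟨ε, hε, ?_⟩
  have hrange : closedBall ystar ε ∩ ⋃ x, F x =
      closedBall ystar ε ∩ ⋃ x ∈ closedBall x₀ (c * ε ^ α), F x := by
    refine Subset.antisymm (fun y hy ↦ ⟨hy.1, ?_⟩) (inter_subset_inter_right _ (iUnion₂_subset_iUnion _ F))
    obtain ⟨a, hya, hdist⟩ := hölder y hy x₀ ⟨hx₀, rfl⟩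
    have hyε : ‖y - ystar‖ ≤ ε := by simpa [dist_eq_norm] using hy.1
    refine mem_biUnion (x := a) ?_ hya
    rw [mem_closedBall, dist_comm, dist_eq_norm]
    exact hdist.trans (by gcongr)
  rw [hrange]
  exact isClosed_closedBall.inter
    (isClosed_biUnion_of_isClosed_graph hgraph (isCompact_closedBall _ _))
end

section
/- Let C ⊆ ℝⁿ be a nonempty closed convex set, f : ℝⁿ → ℝⁿ continuous, 𝓢 the solution map of the variational inequality and 𝓕 the associated normal map. If 𝓢 is lower semicontinuous on its domain, then 𝓕 is an open map from ℝⁿ into range 𝓕, i.e., for every open U ⊆ ℝⁿ, 𝓕(U) is open in range 𝓕 with the subspace topology. -/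
/-!
A point `x ∈ 𝓢(p)` corresponds to the point `x - f x - p` of `𝓕⁻¹(-p)`, whose projection onto `C`
is `x` again. Given `u ∈ U` and points `qₖ → 𝓕(u)` of the range of `𝓕`, lower semicontinuity of
`𝓢` at `-𝓕(u)` moves `Π_C(u) ∈ 𝓢(-𝓕(u))` to solutions `xₖ ∈ 𝓢(-qₖ)` with `xₖ → Π_C(u)`, and then
`uₖ = xₖ - f xₖ + qₖ` satisfies `𝓕(uₖ) = qₖ` and `uₖ → u`. So every convergent sequence in the range
of `𝓕` lifts to a convergent sequence of preimages, which forces `𝓕` to be relatively open.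
-/

open RealInnerProductSpace Filter Topology Set

section Topology

variable {X Y : Type*} [TopologicalSpace X] [TopologicalSpace Y]

theorem exists_isOpen_eq_inter_of_forall_mem_nhdsWithin {s A : Set Y} (hAs : A ⊆ s)
    (hA : ∀ q ∈ A, A ∈ 𝓝[s] q) : ∃ W, IsOpen W ∧ A = W ∩ s := by
  refine ⟨interior {y | y ∈ s → y ∈ A}, isOpen_interior, Subset.antisymm ?_ ?_⟩
  · exact fun q hq ↦
      ⟨mem_interior_iff_mem_nhds.2 (mem_nhdsWithin_iff_eventually.1 (hA q hq)), hAs hq⟩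
  · exact fun y ⟨hyW, hys⟩ ↦ interior_subset hyW hys

theorem mem_nhdsWithin_of_forall_seq [FrechetUrysohnSpace Y] {s A : Set Y} {q : Y}
    (h : ∀ x : ℕ → Y, (∀ k, x k ∈ s) → Tendsto x atTop (𝓝 q) → ∀ᶠ k in atTop, x k ∈ A) :
    A ∈ 𝓝[s] q := by
  by_contra hA
  have hq : q ∈ closure (s \ A) := by
    rw [mem_nhdsWithin_iff_eventually, not_eventually] at hA
    exact mem_closure_iff_frequently.2 (hA.mono fun y hy ↦ Classical.not_imp.1 hy)
  obtain ⟨x, hxs, hx⟩ := mem_closure_iff_seq_limit.1 hq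
  obtain ⟨k, hk⟩ := (h x (fun k ↦ (hxs k).1) hx).exists
  exact (hxs k).2 hk

def LiftsConvergentSeqs (g : X → Y) : Prop :=
  ∀ u (q : ℕ → Y), (∀ k, q k ∈ range g) → Tendsto q atTop (𝓝 (g u)) →
    ∃ v : ℕ → X, (∀ k, g (v k) = q k) ∧ Tendsto v atTop (𝓝 u)

theorem LiftsConvergentSeqs.exists_isOpen_image_eq_inter_range [FrechetUrysohnSpace Y]
    {g : X → Y} (hg : LiftsConvergentSeqs g) {U : Set X} (hU : IsOpen U) :
    ∃ W, IsOpen W ∧ g '' U = W ∩ range g := by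
  refine exists_isOpen_eq_inter_of_forall_mem_nhdsWithin (image_subset_range g U) ?_
  rintro _ ⟨u, hu, rfl⟩
  refine mem_nhdsWithin_of_forall_seq fun q hq hlim ↦ ?_
  obtain ⟨v, hgv, hv⟩ := hg u q hq hlim
  filter_upwards [hv.eventually (hU.mem_nhds hu)] with k hk
  exact hgv k ▸ mem_image_of_mem g hk

end Topology

section NormalMap

variable {E : Type*} [NormedAddCommGroup E] [InnerProductSpace ℝ E]

/-- `proj` is `Π_C`, through its variational characterization. -/
def IsProjOnto (C : Set E) (proj : E → E) : Prop :=
  ∀ u, proj u ∈ C ∧ ∀ x' ∈ C, ⟪u - proj u, x' - proj u⟫ ≤ 0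

/-- The solution set `𝓢(p)` of the variational inequality. -/
def viSolution (C : Set E) (f : E → E) (p : E) : Set E :=
  {x | x ∈ C ∧ ∀ x' ∈ C, 0 ≤ ⟪p + f x, x' - x⟫}

/-- The normal map `𝓕`. -/
def normalMap (f proj : E → E) (u : E) : E :=
  f (proj u) + u - proj u

theorem eq_of_forall_inner_sub_le_zero {C : Set E} {u x y : E} (hx : x ∈ C) (hy : y ∈ C)
    (hxu : ∀ z ∈ C, ⟪u - x, z - x⟫ ≤ 0) (hyu : ∀ z ∈ C, ⟪u - y, z - y⟫ ≤ 0) : x = y := by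
  have hsum : ⟪x - y, x - y⟫ = ⟪u - y, x - y⟫ + ⟪u - x, y - x⟫ := by
    rw [← neg_sub x y, inner_neg_right, ← sub_eq_add_neg, ← inner_sub_left, sub_sub_sub_cancel_left]
  have hle : ⟪x - y, x - y⟫ ≤ 0 := hsum ▸ add_nonpos (hyu x hx) (hxu y hy)
  exact sub_eq_zero.1 (inner_self_eq_zero.1 (le_antisymm hle real_inner_self_nonneg))

variable {C : Set E} {f proj : E → E}

theorem IsProjOnto.proj_mem_viSolution (hproj : IsProjOnto C proj) (u : E) :
    proj u ∈ viSolution C f (-normalMap f proj u) := by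
  refine ⟨(hproj u).1, fun x' hx' ↦ ?_⟩
  have hp : -normalMap f proj u + f (proj u) = -(u - proj u) := by
    rw [normalMap]; abel
  rw [hp, inner_neg_left]
  exact neg_nonneg.2 ((hproj u).2 x' hx')

theorem IsProjOnto.proj_sub_sub_eq (hproj : IsProjOnto C proj) {p x : E}
    (hx : x ∈ viSolution C f p) : proj (x - f x - p) = x := by
  refine eq_of_forall_inner_sub_le_zero (hproj _).1 hx.1 (hproj _).2 fun x' hx' ↦ ?_
  have hp : x - f x - p - x = -(p + f x) := by abel
  rw [hp, inner_neg_left]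
  exact neg_nonpos.2 (hx.2 x' hx')

theorem IsProjOnto.normalMap_sub_sub_eq (hproj : IsProjOnto C proj) {p x : E}
    (hx : x ∈ viSolution C f p) : normalMap f proj (x - f x - p) = -p := by
  rw [normalMap, hproj.proj_sub_sub_eq hx]
  abel

theorem IsProjOnto.liftsConvergentSeqs_normalMap (hproj : IsProjOnto C proj) (hf : Continuous f)
    (hlsc : ∀ p, ∀ x ∈ viSolution C f p, ∀ pk : ℕ → E,
      (∀ k, (viSolution C f (pk k)).Nonempty) → Tendsto pk atTop (𝓝 p) →
      ∃ xk : ℕ → E, (∀ k, xk k ∈ viSolution C f (pk k)) ∧ Tendsto xk atTop (𝓝 x)) :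
    LiftsConvergentSeqs (normalMap f proj) := by
  intro u q hq hlim
  have hdom : ∀ k, (viSolution C f (-q k)).Nonempty := fun k ↦ by
    obtain ⟨v, hv⟩ := hq k
    exact ⟨proj v, hv ▸ hproj.proj_mem_viSolution v⟩
  obtain ⟨x, hx, hxlim⟩ := hlsc _ _ (hproj.proj_mem_viSolution u) _ hdom hlim.neg
  refine ⟨fun k ↦ x k - f (x k) - -q k, fun k ↦ ?_, ?_⟩
  · rw [hproj.normalMap_sub_sub_eq (hx k), neg_neg]
  · have hu : proj u - f (proj u) - -normalMap f proj u = u := by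
      rw [normalMap]; abel
    exact hu ▸ (hxlim.sub ((hf.tendsto _).comp hxlim)).sub hlim.neg

end NormalMap

theorem stmt16_general {n : ℕ} (C : Set (EuclideanSpace ℝ (Fin n)))
    (f : EuclideanSpace ℝ (Fin n) → EuclideanSpace ℝ (Fin n)) (hf : Continuous f)
    (proj : EuclideanSpace ℝ (Fin n) → EuclideanSpace ℝ (Fin n))
    (hproj : ∀ u, proj u ∈ C ∧ ∀ x' ∈ C, ⟪u - proj u, x' - proj u⟫ ≤ 0)
    (S : EuclideanSpace ℝ (Fin n) → Set (EuclideanSpace ℝ (Fin n)))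
    (hS : ∀ p, S p = {x | x ∈ C ∧ ∀ x' ∈ C, 0 ≤ ⟪p + f x, x' - x⟫})
    (Fn : EuclideanSpace ℝ (Fin n) → EuclideanSpace ℝ (Fin n))
    (hFn : ∀ u, Fn u = f (proj u) + u - proj u)
    (hlsc : ∀ p, ∀ x ∈ S p, ∀ pk : ℕ → EuclideanSpace ℝ (Fin n),
      (∀ k, (S (pk k)).Nonempty) → Filter.Tendsto pk Filter.atTop (nhds p) →
      ∃ xk : ℕ → EuclideanSpace ℝ (Fin n),
        (∀ k, xk k ∈ S (pk k)) ∧ Filter.Tendsto xk Filter.atTop (nhds x)) :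
    ∀ U : Set (EuclideanSpace ℝ (Fin n)), IsOpen U →
      ∃ W : Set (EuclideanSpace ℝ (Fin n)), IsOpen W ∧ Fn '' U = W ∩ Set.range Fn := by
  obtain rfl : S = viSolution C f := funext hS
  obtain rfl : Fn = normalMap f proj := funext hFn
  have hproj : IsProjOnto C proj := hproj
  exact fun U hU ↦ (hproj.liftsConvergentSeqs_normalMap hf hlsc).exists_isOpen_image_eq_inter_range hU

/-- If the solution map `𝓢` of the variational inequality is lower
semicontinuous on its domain, then the normal map `𝓕` is an open map from `ℝⁿ` into
`range 𝓕`. -/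
theorem stmt16 {n : ℕ} (C : Set (EuclideanSpace ℝ (Fin n)))
    (hCne : C.Nonempty) (hCcl : IsClosed C) (hCcv : Convex ℝ C)
    (f : EuclideanSpace ℝ (Fin n) → EuclideanSpace ℝ (Fin n)) (hf : Continuous f)
    (proj : EuclideanSpace ℝ (Fin n) → EuclideanSpace ℝ (Fin n))
    (hproj : ∀ u, proj u ∈ C ∧ ∀ x' ∈ C, ⟪u - proj u, x' - proj u⟫ ≤ 0)
    (S : EuclideanSpace ℝ (Fin n) → Set (EuclideanSpace ℝ (Fin n)))
    (hS : ∀ p, S p = {x | x ∈ C ∧ ∀ x' ∈ C, 0 ≤ ⟪p + f x, x' - x⟫})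
    (Fn : EuclideanSpace ℝ (Fin n) → EuclideanSpace ℝ (Fin n))
    (hFn : ∀ u, Fn u = f (proj u) + u - proj u)
    (hlsc : ∀ p, ∀ x ∈ S p, ∀ pk : ℕ → EuclideanSpace ℝ (Fin n),
      (∀ k, (S (pk k)).Nonempty) → Filter.Tendsto pk Filter.atTop (nhds p) →
      ∃ xk : ℕ → EuclideanSpace ℝ (Fin n),
        (∀ k, xk k ∈ S (pk k)) ∧ Filter.Tendsto xk Filter.atTop (nhds x)) :
    ∀ U : Set (EuclideanSpace ℝ (Fin n)), IsOpen U →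
      ∃ W : Set (EuclideanSpace ℝ (Fin n)), IsOpen W ∧ Fn '' U = W ∩ Set.range Fn :=
  stmt16_general C f hf proj hproj S hS Fn hFn hlsc
end

section
/- Let F : ℝⁿ ⇉ ℝᵐ be a set-valued map with closed graph, and suppose F is H\"older metrically regular. Then for every y* ∈ range F, the set B̄_ε(y*) ∩ range F is closed in ℝᵐ for some ε > 0; in particular, range F is locally closed. -/
open Metric Set

/- Regularity at a single point `x*` with `y* ∈ F x*` bounds `dist(x*, F⁻¹ y)` by `c ε^α` uniformly
for `y ∈ B̄_ε(y*) ∩ range F`. So every such `y` is attained over a fixed compact ball, and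
`B̄_ε(y*) ∩ range F` is the projection of the compact set `gph F ∩ (ball × B̄_ε(y*))`. -/

theorem isClosed_inter_iUnion_of_isClosed_graph {X Y : Type*} [TopologicalSpace X]
    [TopologicalSpace Y] [T2Space Y] {F : X → Set Y}
    (hgraph : IsClosed {p : X × Y | p.2 ∈ F p.1}) {K : Set X} {B : Set Y}
    (hK : IsCompact K) (hB : IsCompact B) (hKB : ∀ y ∈ B ∩ ⋃ x, F x, ∃ x ∈ K, y ∈ F x) :
    IsClosed (B ∩ ⋃ x, F x) := by
  have hproj : B ∩ ⋃ x, F x = Prod.snd '' ({p : X × Y | p.2 ∈ F p.1} ∩ K ×ˢ B) := by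
    apply Subset.antisymm
    · intro y hy
      obtain ⟨x, hxK, hyx⟩ := hKB y hy
      exact ⟨(x, y), ⟨hyx, hxK, hy.1⟩, rfl⟩
    · rintro _ ⟨⟨x, y⟩, ⟨hyx, -, hyB⟩, rfl⟩
      exact ⟨hyB, mem_iUnion.2 ⟨x, hyx⟩⟩
  rw [hproj]
  exact (((hK.prod hB).inter_left hgraph).image continuous_snd).isClosed

/-- If a closed-graph set-valued map `F` is Hölder metrically regular, then for
every `y* ∈ range F` some closed-ball neighbourhood meets `range F` in a closed set; in
particular `range F` is locally closed. -/
theorem stmt17 {n m : ℕ}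
    (F : EuclideanSpace ℝ (Fin n) → Set (EuclideanSpace ℝ (Fin m)))
    (hgraph : IsClosed {p : EuclideanSpace ℝ (Fin n) × EuclideanSpace ℝ (Fin m) | p.2 ∈ F p.1})
    (hreg : ∀ ystar ∈ ⋃ x, F x, ∀ K : Set (EuclideanSpace ℝ (Fin n)), IsCompact K →
      ∃ ε > (0:ℝ), ∃ c > (0:ℝ), ∃ α > (0:ℝ),
        ∀ x ∈ K ∩ {x | (F x).Nonempty}, ∀ y ∈ Metric.closedBall ystar ε ∩ ⋃ x, F x,
          Metric.infDist x {x' | y ∈ F x'} ≤ c * Metric.infDist y (F x) ^ α) :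
    ∀ ystar ∈ ⋃ x, F x, ∃ ε > (0:ℝ),
      IsClosed (Metric.closedBall ystar ε ∩ ⋃ x, F x) := by
  intro ystar hystar
  obtain ⟨xstar, hxstar⟩ := mem_iUnion.1 hystar
  obtain ⟨ε, hε, c, hc, α, hα, hest⟩ := hreg ystar hystar {xstar} isCompact_singleton
  refine ⟨ε, hε, isClosed_inter_iUnion_of_isClosed_graph hgraph
    (isCompact_closedBall xstar (c * ε ^ α + 1)) (isCompact_closedBall ystar ε) ?_⟩
  intro y hy
  have hdist : infDist xstar {x | y ∈ F x} ≤ c * ε ^ α := by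
    refine (hest xstar ⟨rfl, ystar, hxstar⟩ y hy).trans ?_
    have hyF : infDist y (F xstar) ≤ ε := (infDist_le_dist_of_mem hxstar).trans hy.1
    gcongr
    exact infDist_nonneg
  obtain ⟨x, hyx, hx⟩ :=
    (infDist_lt_iff (mem_iUnion.1 hy.2)).1 (hdist.trans_lt (lt_add_one _))
  exact ⟨x, mem_closedBall'.2 hx.le, hyx⟩
end
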